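/- Let o be a commutative ring, B a topological group, B_0 an open subgroup of B such that the category of smooth o-representations of B_0 is noetherian (every o[B_0]-submodule of a finite type smooth representation of B_0 is of finite type). Let 0 -> V' -> V -> V'' -> 0 be an exact sequence of smooth representations of B over o with V' of finite type over o[B] and V of finite presentation relative to B_0. Then V'' is of finite presentation relative to B_0. -/

import Mathlib

noncomputable section
attribute [local instance] Classical.propDecidable
open Pointwise


/-! ### Generalities on smooth representations over a commutative ring `o` -/

section RepPrelim

variable (o : Type) [CommRing o]

/-- The `o`-submodule of `V` generated by `{s • w | s ∈ S, w ∈ W}`; written `<S W>` in the paper. -/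
def gspan {H : Type} (V : Type) [AddCommGroup V] [Module o V] [SMul H V]
    (S : Set H) (W : Set V) : Submodule o V :=
  Submodule.span o {v : V | ∃ s ∈ S, ∃ w ∈ W, v = s • w}

/-- A submodule `N` is stable under the set `S` of group elements. -/
def IsStableSub {H : Type} (V : Type) [AddCommGroup V] [Module o V] [SMul H V]
    (S : Set H) (N : Submodule o V) : Prop :=
  ∀ s ∈ S, ∀ v ∈ N, s • v ∈ N

/-- `N` is a finitely generated module over `o[S]`. -/
def IsFGOver {H : Type} (V : Type) [AddCommGroup V] [Module o V] [SMul H V]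
    (S : Set H) (N : Submodule o V) : Prop :=
  ∃ X : Finset V, (X : Set V) ⊆ (N : Set V) ∧ N = gspan o V S (X : Set V)

/-- The submodule of `S`-invariants. -/
def invariantsSub (H : Type) [Group H] (V : Type) [AddCommGroup V] [Module o V]
    [DistribMulAction H V] [SMulCommClass H o V] (S : Set H) : Submodule o V where
  carrier := {v | ∀ s ∈ S, s • v = v}
  add_mem' := by intro a b ha hb s hs; rw [smul_add, ha s hs, hb s hs]
  zero_mem' := by intro s hs; exact smul_zero s
  smul_mem' := by intro c v hv s hs; rw [smul_comm, hv s hs]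

/-- The action of a fixed group element as an `o`-linear map. -/
def actLin (H : Type) [Group H] (V : Type) [AddCommGroup V] [Module o V]
    [DistribMulAction H V] [SMulCommClass H o V] (g : H) : V →ₗ[o] V where
  toFun v := g • v
  map_add' := smul_add g
  map_smul' c v := by simpa using smul_comm g c v

/-- `V` has finite length as an `o[H]`-module: it admits a composition series of
`H`-stable `o`-submodules. -/
def IsFiniteLengthRep (H : Type) [Group H] (V : Type) [AddCommGroup V] [Module o V]
    [DistribMulAction H V] : Prop :=
  ∃ (n : ℕ) (c : Fin (n + 1) → Submodule o V),
    c 0 = ⊥ ∧ c (Fin.last n) = ⊤ ∧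
    (∀ i, IsStableSub o V (Set.univ : Set H) (c i)) ∧
    (∀ i : Fin n, c i.castSucc < c i.succ) ∧
    (∀ i : Fin n, ∀ N : Submodule o V, IsStableSub o V (Set.univ : Set H) N →
      c i.castSucc ≤ N → N ≤ c i.succ → N = c i.castSucc ∨ N = c i.succ)

/-- Smoothness: each vector has open stabilizer. -/
def IsSmoothRep (H : Type) [Group H] [TopologicalSpace H] (V : Type) [AddCommGroup V]
    [Module o V] [DistribMulAction H V] : Prop :=
  ∀ v : V, IsOpen {h : H | h • v = v}

/-- Admissibility: invariants under any compact open subgroup form a f.g. `o`-module. -/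
def IsAdmissibleRep (H : Type) [Group H] [TopologicalSpace H] (V : Type) [AddCommGroup V]
    [Module o V] [DistribMulAction H V] [SMulCommClass H o V] : Prop :=
  ∀ H' : Subgroup H, IsCompact (H' : Set H) → IsOpen (H' : Set H) →
    (invariantsSub o H V (H' : Set H)).FG

end RepPrelim

/-! ### Compact induction `ind_{S}^{H}(V₀)` and finite presentations -/

section Induction

variable (o : Type) [CommRing o]
variable {H : Type} [Group H] {V : Type} [AddCommGroup V] [Module o V]
variable [DistribMulAction H V] [SMulCommClass H o V]

/-- The compact induction `ind_S^H (V₀)`, realized as the `o`-module of functions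
`f : H → V` with values in `V₀`, satisfying `f (s * h) = s • f h` for `s ∈ S`, and
supported on finitely many right cosets `S * x`. -/
def Ind (S : Subgroup H) (V0 : Submodule o V) : Submodule o (H → V) where
  carrier := {f | (∀ h, f h ∈ V0) ∧ (∀ s ∈ S, ∀ h, f (s * h) = s • f h) ∧
      ∃ X : Finset H, ∀ h, f h ≠ 0 → ∃ s ∈ S, ∃ x ∈ X, h = s * x}
  add_mem' := by
    rintro f g ⟨hf1, hf2, Xf, hXf⟩ ⟨hg1, hg2, Xg, hXg⟩
    refine ⟨fun h => V0.add_mem (hf1 h) (hg1 h),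
      fun s hs h => by simp only [Pi.add_apply, hf2 s hs h, hg2 s hs h, smul_add],
      Xf ∪ Xg, fun h hh => ?_⟩
    by_cases hf : f h = 0
    · have hg : g h ≠ 0 := fun h0 => hh (by simp [Pi.add_apply, hf, h0])
      obtain ⟨s, hs, x, hx, hxx⟩ := hXg h hg
      exact ⟨s, hs, x, Finset.mem_union_right _ hx, hxx⟩
    · obtain ⟨s, hs, x, hx, hxx⟩ := hXf h hf
      exact ⟨s, hs, x, Finset.mem_union_left _ hx, hxx⟩
  zero_mem' :=
    ⟨fun _ => V0.zero_mem, fun s _ _ => (smul_zero s).symm, ∅, fun h hh => absurd rfl hh⟩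
  smul_mem' := by
    rintro c f ⟨hf1, hf2, Xf, hXf⟩
    refine ⟨fun h => V0.smul_mem c (hf1 h),
      fun s hs h => by
        simp only [Pi.smul_apply, hf2 s hs h]
        exact (smul_comm s c (f h)).symm,
      Xf, fun h hh => hXf h (fun h0 => hh (by simp [Pi.smul_apply, h0]))⟩

variable {S : Subgroup H} {V0 : Submodule o V}

/-- Right translation, giving the `H`-action on the compact induction. -/
def indTrans (g : H) (f : H → V) : H → V := fun h => f (h * g)

lemma indTrans_mem (g : H) {f : H → V} (hf : f ∈ Ind o S V0) : indTrans g f ∈ Ind o S V0 := by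
  obtain ⟨h1, h2, X, hX⟩ := hf
  refine ⟨fun h => h1 _, fun s hs h => by
      simpa [indTrans, mul_assoc] using h2 s hs (h * g),
    X.image (· * g⁻¹), fun h hh => ?_⟩
  obtain ⟨s, hs, x, hx, hxx⟩ := hX (h * g) hh
  refine ⟨s, hs, x * g⁻¹, Finset.mem_image_of_mem _ hx, ?_⟩
  rw [← mul_assoc, ← hxx, mul_assoc, mul_inv_cancel, mul_one]

instance : SMul H (Ind o S V0) :=
  ⟨fun g f => ⟨indTrans g (f : H → V), indTrans_mem o g f.2⟩⟩

lemma ind_smul_apply (g : H) (f : Ind o S V0) (h : H) :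
    ((g • f : Ind o S V0) : H → V) h = (f : H → V) (h * g) := rfl

instance : MulAction H (Ind o S V0) where
  one_smul f := Subtype.ext (funext fun h => by simp [ind_smul_apply])
  mul_smul g1 g2 f := Subtype.ext (funext fun h => by simp [ind_smul_apply, mul_assoc])

instance : DistribMulAction H (Ind o S V0) where
  smul_add g f1 f2 := Subtype.ext (funext fun h => rfl)
  smul_zero g := Subtype.ext (funext fun h => rfl)

instance : SMulCommClass H o (Ind o S V0) :=
  ⟨fun g c f => Subtype.ext (funext fun h => rfl)⟩

/-- The function `[1, v]` supported on `S`, with value `v` at `1`. -/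
def unitFn (S : Subgroup H) (v : V) : H → V := fun h => if h ∈ S then h • v else 0

lemma unitFn_mem (hst : IsStableSub o V (S : Set H) V0) {v : V} (hv : v ∈ V0) :
    unitFn S v ∈ Ind o S V0 := by
  refine ⟨fun h => ?_, fun s hs h => ?_, {1}, fun h hh => ?_⟩
  · by_cases h1 : h ∈ S
    · simpa [unitFn, h1] using hst h h1 v hv
    · simp [unitFn, h1, V0.zero_mem]
  · by_cases h1 : h ∈ S
    · have hsh : s * h ∈ S := S.mul_mem hs h1
      simp [unitFn, h1, hsh, mul_smul]
    · have hsh : s * h ∉ S := fun hc => h1 (by simpa using S.mul_mem (S.inv_mem hs) hc)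
      simp [unitFn, h1, hsh]
  · by_cases h1 : h ∈ S
    · exact ⟨h, h1, 1, Finset.mem_singleton_self 1, (mul_one h).symm⟩
    · simp [unitFn, h1] at hh

/-- The element `[1, v]` of the compact induction. -/
def unitElt (hst : IsStableSub o V (S : Set H) V0) {v : V} (hv : v ∈ V0) : Ind o S V0 :=
  ⟨unitFn S v, unitFn_mem o hst hv⟩

/-- `P` is the natural presentation map `ind_S^H (V₀) → V`: it is `H`-equivariant and sends
`[1, v]` to `v`. -/
def IsPresMap (hst : IsStableSub o V (S : Set H) V0) (P : Ind o S V0 →ₗ[o] V) : Prop :=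
  (∀ (g : H) (f : Ind o S V0), P (g • f) = g • P f) ∧
  (∀ v (hv : v ∈ V0), P (unitElt o hst hv) = v)

end Induction

/-- `V₀ ⊆ V` yields a finite presentation `ind_S^H (V₀) → V`: `V₀` is an `S`-stable
`o`-submodule, finitely generated over `o[S]`, generating `V` over `o[H]`, and the kernel of
the natural presentation map is finitely generated over `o[H]`. -/
def FinitelyPresentedVia (o : Type) [CommRing o] {H : Type} [Group H] {V : Type}
    [AddCommGroup V] [Module o V] [DistribMulAction H V] [SMulCommClass H o V]
    (S : Subgroup H) (V0 : Submodule o V) : Prop :=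
  ∃ hst : IsStableSub o V (S : Set H) V0,
    IsFGOver o V (S : Set H) V0 ∧ gspan o V (Set.univ : Set H) (V0 : Set V) = ⊤ ∧
    ∃ P : Ind o S V0 →ₗ[o] V, IsPresMap o hst P ∧
      IsFGOver o (Ind o S V0) (Set.univ : Set H) (LinearMap.ker P)

/-- `V` is of finite presentation relative to the open subgroup `S`. -/
def HasFinitePres (o : Type) [CommRing o] {H : Type} [Group H] (V : Type)
    [AddCommGroup V] [Module o V] [DistribMulAction H V] [SMulCommClass H o V]
    (S : Subgroup H) : Prop :=
  ∃ V0 : Submodule o V, FinitelyPresentedVia o S V0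

/-!
Take `V₀'' = π(V₀)`. Compact induction is right exact here: `ind(V₀) → ind(V₀'')` is surjective
(lift values at coset representatives), and `π ∘ P` kills its kernel because every element of
`ind(V₀)` is a finite sum of translates `x⁻¹ • [1, v]`. Hence `π ∘ P` descends to the presentation
map `P''` of `V''`, whose kernel is the image of `ker (π ∘ P) = P⁻¹(ι V')`. The latter is generated
over `o[B]` by generators of `ker P` together with preimages under the surjection `P` of the images
of finitely many generators of `V'`.
-/

section Gspan

variable {o : Type} [CommRing o] {H V W : Type} [AddCommGroup V] [Module o V]
  [AddCommGroup W] [Module o W]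

lemma gspan_le [SMul H V] {S : Set H} {T : Set V} {N : Submodule o V}
    (hT : T ⊆ N) (hN : IsStableSub o V S N) : gspan o V S T ≤ N :=
  Submodule.span_le.2 <| by
    rintro v ⟨s, hs, w, hw, rfl⟩
    exact hN s hs w (hT hw)

lemma gspan_union [SMul H V] (S : Set H) (T T' : Set V) :
    gspan o V S (T ∪ T') = gspan o V S T ⊔ gspan o V S T' := by
  rw [gspan, gspan, gspan, ← Submodule.span_union]
  congr 1
  ext v
  constructor
  · rintro ⟨s, hs, w, hw | hw, rfl⟩
    exacts [Or.inl ⟨s, hs, w, hw, rfl⟩, Or.inr ⟨s, hs, w, hw, rfl⟩]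
  · rintro (⟨s, hs, w, hw, rfl⟩ | ⟨s, hs, w, hw, rfl⟩)
    exacts [⟨s, hs, w, Or.inl hw, rfl⟩, ⟨s, hs, w, Or.inr hw, rfl⟩]

lemma map_gspan [SMul H V] [SMul H W] (φ : V →ₗ[o] W) (hφ : ∀ (g : H) v, φ (g • v) = g • φ v)
    (S : Set H) (T : Set V) :
    (gspan o V S T).map φ = gspan o W S (φ '' T) := by
  rw [gspan, gspan, Submodule.map_span]
  congr 1
  ext w
  constructor
  · rintro ⟨v, ⟨s, hs, t, ht, rfl⟩, rfl⟩
    exact ⟨s, hs, φ t, ⟨t, ht, rfl⟩, hφ s t⟩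
  · rintro ⟨s, hs, _, ⟨t, ht, rfl⟩, rfl⟩
    exact ⟨s • t, ⟨s, hs, t, ht, rfl⟩, hφ s t⟩

lemma subset_gspan [Monoid H] [MulAction H V] {S : Set H} (hS : (1 : H) ∈ S) (T : Set V) :
    T ⊆ gspan o V S T :=
  fun v hv => Submodule.subset_span ⟨1, hS, v, hv, (one_smul H v).symm⟩

lemma IsStableSub.map [SMul H V] [SMul H W] {S : Set H} {N : Submodule o V}
    (hN : IsStableSub o V S N) (φ : V →ₗ[o] W) (hφ : ∀ (g : H) v, φ (g • v) = g • φ v) :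
    IsStableSub o W S (N.map φ) := by
  rintro s hs _ ⟨v, hv, rfl⟩
  exact ⟨s • v, hN s hs v hv, hφ s v⟩

lemma isStableSub_ker [Monoid H] [DistribMulAction H V] [DistribMulAction H W]
    (φ : V →ₗ[o] W) (hφ : ∀ (g : H) v, φ (g • v) = g • φ v) (S : Set H) :
    IsStableSub o V S (LinearMap.ker φ) := by
  intro s _ v hv
  rw [LinearMap.mem_ker] at hv ⊢
  rw [hφ, hv, smul_zero]

lemma IsFGOver.of_eq_gspan [Monoid H] [MulAction H V] {S : Set H} (hS : (1 : H) ∈ S)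
    {N : Submodule o V} {X : Finset V} (hN : N = gspan o V S X) : IsFGOver o V S N :=
  ⟨X, hN ▸ subset_gspan hS _, hN⟩

lemma IsFGOver.map [SMul H V] [SMul H W] {S : Set H} {N : Submodule o V}
    (hN : IsFGOver o V S N) (φ : V →ₗ[o] W) (hφ : ∀ (g : H) v, φ (g • v) = g • φ v) :
    IsFGOver o W S (N.map φ) := by
  obtain ⟨X, hXN, rfl⟩ := hN
  refine ⟨X.image φ, ?_, ?_⟩
  · rw [Finset.coe_image]
    exact Set.image_mono hXN
  · rw [map_gspan φ hφ, Finset.coe_image]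

lemma isFGOver_ker_comp [Monoid H] [DistribMulAction H V] [DistribMulAction H W]
    {U : Type} [AddCommGroup U] [Module o U] [DistribMulAction H U]
    (P : U →ₗ[o] V) (hP : ∀ (g : H) u, P (g • u) = g • P u) (hPsurj : Function.Surjective P)
    (π : V →ₗ[o] W) (hker : IsFGOver o U (Set.univ : Set H) (LinearMap.ker P)) {T : Finset V}
    (hπ : LinearMap.ker π = gspan o V (Set.univ : Set H) T) :
    IsFGOver o U (Set.univ : Set H) (LinearMap.ker (π ∘ₗ P)) := by
  obtain ⟨Y, -, hY⟩ := hker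
  set Z := T.image (Function.surjInv hPsurj)
  have hPZ : P '' (Z : Set U) = T := by
    rw [Finset.coe_image, Set.image_image]
    simp only [Function.surjInv_eq hPsurj, Set.image_id']
  refine IsFGOver.of_eq_gspan (Set.mem_univ 1) (X := Y ∪ Z) ?_
  rw [LinearMap.ker_comp, hπ, ← hPZ, ← map_gspan P hP, Submodule.comap_map_eq, hY,
    Finset.coe_union, gspan_union, sup_comm]

end Gspan

lemma exists_rightCoset_rep {H : Type} [Group H] (S : Subgroup H) :
    ∃ rep : H → H, (∀ h, h * (rep h)⁻¹ ∈ S) ∧ ∀ s ∈ S, ∀ h, rep (s * h) = rep h := by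
  refine ⟨fun h => (Quotient.mk (QuotientGroup.rightRel S) h).out, fun h => ?_, fun s hs h => ?_⟩
  · rw [← QuotientGroup.rightRel_apply]
    exact Quotient.exact (Quotient.out_eq _)
  · refine congrArg Quotient.out (Quotient.sound ?_).symm
    exact QuotientGroup.rightRel_apply.2 (by rwa [mul_inv_cancel_right])

section Induction

variable {o : Type} [CommRing o] {H : Type} [Group H] {V W : Type}
  [AddCommGroup V] [Module o V] [DistribMulAction H V] [SMulCommClass H o V]
  [AddCommGroup W] [Module o W] [DistribMulAction H W] [SMulCommClass H o W]
  {S : Subgroup H} {V0 : Submodule o V}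

lemma Ind.apply_eq_smul (f : Ind o S V0) {h x : H} (hx : h * x⁻¹ ∈ S) :
    (f : H → V) h = (h * x⁻¹) • (f : H → V) x := by
  simpa using f.2.2.1 _ hx x

lemma Ind.ext_iff {f f' : Ind o S V0} : f = f' ↔ ∀ h, (f : H → V) h = (f' : H → V) h :=
  Subtype.ext_iff.trans funext_iff

/-- Induction on the finite set of cosets supporting `f`, peeling off `S x` with the translate
`x⁻¹ • [1, f x]`. -/
lemma IsPresMap.apply_mem {hst : IsStableSub o V (S : Set H) V0} {P : Ind o S V0 →ₗ[o] V}
    (hP : IsPresMap o hst P) {N : Submodule o V} (hN : IsStableSub o V (Set.univ : Set H) N)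
    {f : Ind o S V0} (hf : ∀ h, (f : H → V) h ∈ N) : P f ∈ N := by
  obtain ⟨-, -, X, hX⟩ := f.2
  induction X using Finset.induction_on generalizing f with
  | empty =>
    have hf0 : f = 0 := Ind.ext_iff.2 fun h => by_contra fun hne => by simpa using hX h hne
    rw [hf0, map_zero]
    exact N.zero_mem
  | insert x X _ ih =>
    set u : Ind o S V0 := x⁻¹ • unitElt o hst (f.2.1 x)
    have hu : ∀ h, ((f - u : Ind o S V0) : H → V) h = if h * x⁻¹ ∈ S then 0 else (f : H → V) h := by
      intro h
      change (f : H → V) h - unitFn S ((f : H → V) x) (h * x⁻¹) = _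
      unfold unitFn
      split_ifs with hh
      · rw [← Ind.apply_eq_smul f hh, sub_self]
      · rw [sub_zero]
    have hPu : P u ∈ N := by
      rw [hP.1, hP.2]
      exact hN _ trivial _ (hf x)
    rw [← sub_add_cancel f u, map_add]
    refine N.add_mem (ih (fun h => ?_) fun h hne => ?_) hPu
    · rw [hu]
      split_ifs
      exacts [N.zero_mem, hf h]
    · rw [hu] at hne
      split_ifs at hne with hh
      · exact absurd rfl hne
      obtain ⟨s, hs, y, hy, rfl⟩ := hX h hne
      rcases Finset.mem_insert.1 hy with rfl | hy
      · exact absurd (by simpa using hs) hh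
      · exact ⟨s, hs, y, hy, rfl⟩

lemma IsPresMap.gspan_le_range {hst : IsStableSub o V (S : Set H) V0} {P : Ind o S V0 →ₗ[o] V}
    (hP : IsPresMap o hst P) : gspan o V (Set.univ : Set H) V0 ≤ LinearMap.range P := by
  refine gspan_le (fun v hv => ⟨unitElt o hst hv, hP.2 v hv⟩) ?_
  rintro g - _ ⟨f, rfl⟩
  exact ⟨g • f, hP.1 g f⟩

variable (o) in
def indMap (π : V →ₗ[o] W) (hπ : ∀ (g : H) v, π (g • v) = g • π v) :
    Ind o S V0 →ₗ[o] Ind o S (V0.map π) where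
  toFun f := ⟨fun h => π ((f : H → V) h), by
    obtain ⟨hval, hequiv, X, hX⟩ := f.2
    refine ⟨fun h => Submodule.mem_map_of_mem (hval h), fun s hs h => ?_, X, fun h hne => ?_⟩
    · simp only [hequiv s hs h, hπ]
    · exact hX h fun h0 => hne (by simp only [h0, map_zero])⟩
  map_add' f f' := Subtype.ext (funext fun h => map_add π _ _)
  map_smul' c f := Subtype.ext (funext fun h => map_smul π c _)

variable (π : V →ₗ[o] W) (hπ : ∀ (g : H) v, π (g • v) = g • π v)

lemma indMap_apply (f : Ind o S V0) (h : H) :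
    ((indMap o π hπ f : Ind o S (V0.map π)) : H → W) h = π ((f : H → V) h) := rfl

lemma indMap_smul (g : H) (f : Ind o S V0) : indMap o π hπ (g • f) = g • indMap o π hπ f := rfl

lemma indMap_unitElt (hst : IsStableSub o V S V0) {v : V} (hv : v ∈ V0) :
    indMap o π hπ (unitElt o hst hv) =
      unitElt o (hst.map π hπ) (Submodule.mem_map_of_mem hv) := by
  refine Ind.ext_iff.2 fun h => ?_
  change π (unitFn S v h) = unitFn S (π v) h
  unfold unitFn
  split_ifs
  exacts [hπ h v, map_zero π]

/-- Values are lifted through `π` at coset representatives and extended `S`-equivariantly;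
lifting `0` to `0` keeps the support finite modulo `S`. -/
lemma indMap_surjective (hst : IsStableSub o V (S : Set H) V0) :
    Function.Surjective (indMap o π hπ : Ind o S V0 →ₗ[o] _) := by
  intro f''
  obtain ⟨hval, hequiv, X, hX⟩ := f''.2
  have hlift : ∀ h, ∃ v ∈ V0, π v = (f'' : H → W) h ∧ ((f'' : H → W) h = 0 → v = 0) := by
    intro h
    by_cases hz : (f'' : H → W) h = 0
    · exact ⟨0, V0.zero_mem, by rw [map_zero, hz], fun _ => rfl⟩
    · obtain ⟨v, hv, hπv⟩ := hval h
      exact ⟨v, hv, hπv, fun h0 => absurd h0 hz⟩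
  choose l hlV0 hlπ hl0 using hlift
  obtain ⟨rep, hrep, hrep_mul⟩ := exists_rightCoset_rep S
  have hf : (fun h => (h * (rep h)⁻¹) • l (rep h)) ∈ Ind o S V0 := by
    refine ⟨fun h => hst _ (hrep h) _ (hlV0 _), fun s hs h => ?_, X, fun h hne => ?_⟩
    · dsimp only
      rw [hrep_mul s hs h, ← mul_smul, mul_assoc]
    · have hne' : (f'' : H → W) (rep h) ≠ 0 := fun h0 =>
        hne (by dsimp only; rw [hl0 _ h0, smul_zero])
      obtain ⟨s, hs, x, hxX, hrx⟩ := hX (rep h) hne'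
      refine ⟨h * (rep h)⁻¹ * s, S.mul_mem (hrep h) hs, x, hxX, ?_⟩
      rw [mul_assoc, ← hrx, inv_mul_cancel_right]
  refine ⟨⟨_, hf⟩, Ind.ext_iff.2 fun h => ?_⟩
  rw [indMap_apply, hπ, hlπ, Ind.apply_eq_smul f'' (hrep h)]

end Induction

namespace IsPresMap

variable {o : Type} [CommRing o] {H : Type} [Group H] {V W : Type}
  [AddCommGroup V] [Module o V] [DistribMulAction H V] [SMulCommClass H o V]
  [AddCommGroup W] [Module o W] [DistribMulAction H W] [SMulCommClass H o W]
  {S : Subgroup H} {V0 : Submodule o V} {hst : IsStableSub o V (S : Set H) V0}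
  {P : Ind o S V0 →ₗ[o] V} (π : V →ₗ[o] W) (hπ : ∀ (g : H) v, π (g • v) = g • π v)

lemma ker_indMap_le (hP : IsPresMap o hst P) :
    LinearMap.ker (indMap o π hπ) ≤ LinearMap.ker (π ∘ₗ P) := fun _ hf =>
  hP.apply_mem (isStableSub_ker π hπ _) fun h => congrFun (congrArg Subtype.val hf) h

variable (hP : IsPresMap o hst P)

def desc : Ind o S (V0.map π) →ₗ[o] W :=
  (LinearMap.ker (indMap o π hπ)).liftQ (π ∘ₗ P) (hP.ker_indMap_le π hπ) ∘ₗ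
    ((indMap o π hπ).quotKerEquivOfSurjective (indMap_surjective π hπ hst)).symm.toLinearMap

lemma desc_indMap (f : Ind o S V0) : hP.desc π hπ (indMap o π hπ f) = π (P f) := by
  rw [desc, LinearMap.comp_apply, LinearEquiv.coe_coe,
    ← LinearMap.quotKerEquivOfSurjective_apply_mk _ (indMap_surjective π hπ hst),
    LinearEquiv.symm_apply_apply, Submodule.liftQ_apply, LinearMap.comp_apply]

lemma isPresMap_desc : IsPresMap o (hst.map π hπ) (hP.desc π hπ) := by
  refine ⟨fun g f => ?_, fun _ ⟨v, hv, hπv⟩ => ?_⟩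
  · obtain ⟨f, rfl⟩ := indMap_surjective π hπ hst f
    rw [← indMap_smul, desc_indMap, desc_indMap, hP.1, hπ]
  · subst hπv
    rw [← indMap_unitElt π hπ hst hv, desc_indMap, hP.2]

lemma ker_desc :
    LinearMap.ker (hP.desc π hπ) = (LinearMap.ker (π ∘ₗ P)).map (indMap o π hπ) := by
  have hcomp : hP.desc π hπ ∘ₗ indMap o π hπ = π ∘ₗ P := LinearMap.ext (hP.desc_indMap π hπ)
  rw [← hcomp, LinearMap.ker_comp,
    Submodule.map_comap_eq_of_surjective (indMap_surjective π hπ hst)]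

end IsPresMap

theorem statement9_general
    (o : Type) [CommRing o]
    (B : Type) [Group B] (B0 : Subgroup B)
    (V' : Type) [AddCommGroup V'] [Module o V']
    [DistribMulAction B V'] [SMulCommClass B o V']
    (V : Type) [AddCommGroup V] [Module o V]
    [DistribMulAction B V] [SMulCommClass B o V]
    (V'' : Type) [AddCommGroup V''] [Module o V'']
    [DistribMulAction B V''] [SMulCommClass B o V'']
    (ι : V' →ₗ[o] V)
    (hιeq : ∀ (b : B) (v : V'), ι (b • v) = b • ι v)
    (π : V →ₗ[o] V'') (hπsurj : Function.Surjective ⇑π)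
    (hπeq : ∀ (b : B) (v : V), π (b • v) = b • π v)
    (hexact : LinearMap.range ι = LinearMap.ker π)
    (hV'ft : ∃ X : Finset V', gspan o V' (Set.univ : Set B) (X : Set V') = ⊤)
    (hV : HasFinitePres o V B0) :
    HasFinitePres o V'' B0 := by
  obtain ⟨V0, hst, hfg, htop, P, hP, hker⟩ := hV
  obtain ⟨X', hX'⟩ := hV'ft
  have hPsurj : Function.Surjective P :=
    LinearMap.range_eq_top.1 (top_le_iff.1 (htop ▸ hP.gspan_le_range))
  have hkerπ : LinearMap.ker π = gspan o V (Set.univ : Set B) ↑(X'.image ι) := by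
    rw [← hexact, LinearMap.range_eq_map, ← hX', map_gspan ι hιeq, Finset.coe_image]
  refine ⟨V0.map π, hst.map π hπeq, hfg.map π hπeq, ?_, hP.desc π hπeq,
    hP.isPresMap_desc π hπeq, ?_⟩
  · rw [Submodule.map_coe, ← map_gspan π hπeq, htop, Submodule.map_top,
      LinearMap.range_eq_top.2 hπsurj]
  · rw [hP.ker_desc]
    exact (isFGOver_ker_comp P hP.1 hPsurj π hker hkerπ).map _ (indMap_smul π hπeq)

/-- If the category of smooth `o`-representations of `B₀` is noetherian,
and `0 → V' → V → V'' → 0` is exact with `V'` of finite type and `V` of finite presentation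
relative to `B₀`, then `V''` is of finite presentation relative to `B₀`. -/
theorem statement9
    (o : Type) [CommRing o]
    (B : Type) [Group B] [TopologicalSpace B] (B0 : Subgroup B) (hB0 : IsOpen (B0 : Set B))
    (hnoeth : ∀ (W : Type) [AddCommGroup W] [Module o W] [DistribMulAction (↥B0) W]
      [SMulCommClass (↥B0) o W], IsSmoothRep o (↥B0) W →
      (∃ X : Finset W, gspan o W (Set.univ : Set ↥B0) (X : Set W) = ⊤) →
      ∀ N : Submodule o W, IsStableSub o W (Set.univ : Set ↥B0) N →
        IsFGOver o W (Set.univ : Set ↥B0) N)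
    (V' : Type) [AddCommGroup V'] [Module o V']
    [DistribMulAction B V'] [SMulCommClass B o V']
    (hsm' : IsSmoothRep o B V')
    (V : Type) [AddCommGroup V] [Module o V]
    [DistribMulAction B V] [SMulCommClass B o V]
    (hsm : IsSmoothRep o B V)
    (V'' : Type) [AddCommGroup V''] [Module o V'']
    [DistribMulAction B V''] [SMulCommClass B o V'']
    (hsm'' : IsSmoothRep o B V'')
    (ι : V' →ₗ[o] V) (hιinj : Function.Injective ⇑ι)
    (hιeq : ∀ (b : B) (v : V'), ι (b • v) = b • ι v)
    (π : V →ₗ[o] V'') (hπsurj : Function.Surjective ⇑π)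
    (hπeq : ∀ (b : B) (v : V), π (b • v) = b • π v)
    (hexact : LinearMap.range ι = LinearMap.ker π)
    (hV'ft : ∃ X : Finset V', gspan o V' (Set.univ : Set B) (X : Set V') = ⊤)
    (hV : HasFinitePres o V B0) :
    HasFinitePres o V'' B0 :=
  statement9_general o B B0 V' V V'' ι hιeq π hπsurj hπeq hexact hV'ft hV
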